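/- arXiv:2301.09547 — 2 statements merged into one kernel-verified Lean document; each statement's English description precedes it below -/
import Mathlib

section
/- Let $X_1,\dots,X_N \in \mathbb{R}^3$ satisfy $\min_{i\neq j}|X_i - X_j| \geq c N^{-1/3}$. Then for every point $x \in \mathbb{R}^3$, $\frac{1}{N}\sum_{i : |x - X_i| \geq c N^{-1/3}/2} \frac{1}{|x - X_i|^4} \leq C \min\left(N^{1/3}, \operatorname{dist}(x, \{X_1,\dots,X_N\})^{-1}\right)$ for a constant $C$ depending only on $c$. -/
/-!
Let `r = c N^{-1/3}`. The balls of radius `r / 2` around the points are disjoint, so comparing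
volumes shows that at most `(4R / r)³` points lie within distance `R ≥ r / 2` of `x`. Every
distance in the sum is at least `ρ = max (r / 2) (infDist x {X_i})`; splitting the sum into
dyadic shells `2ᵏρ ≤ |x - X_i| < 2ᵏ⁺¹ρ` turns it into a geometric series bounded by
`2¹⁰ r⁻³ ρ⁻¹ = 2¹⁰ c⁻³ N ρ⁻¹`, and `ρ⁻¹ ≤ max (2 / c) 1 * min (N^{1/3}, infDist⁻¹)`.
-/

open Metric MeasureTheory Finset Module

theorem pow_log_floor_div_mul_le_and_lt {ρ t : ℝ} (hρ : 0 < ρ) (ht : ρ ≤ t) :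
    2 ^ Nat.log 2 ⌊t / ρ⌋₊ * ρ ≤ t ∧ t < 2 ^ (Nat.log 2 ⌊t / ρ⌋₊ + 1) * ρ := by
  have hfloor : ⌊t / ρ⌋₊ ≠ 0 := (Nat.floor_pos.2 ((one_le_div hρ).2 ht)).ne'
  rw [← le_div_iff₀ hρ, ← div_lt_iff₀ hρ]
  constructor
  · calc (2 : ℝ) ^ Nat.log 2 ⌊t / ρ⌋₊ ≤ ⌊t / ρ⌋₊ := by
          exact_mod_cast Nat.pow_log_le_self 2 hfloor
      _ ≤ t / ρ := Nat.floor_le (div_pos (hρ.trans_le ht) hρ).le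
  · calc t / ρ < ⌊t / ρ⌋₊ + 1 := Nat.lt_floor_add_one _
      _ ≤ 2 ^ (Nat.log 2 ⌊t / ρ⌋₊ + 1) := by
          exact_mod_cast Nat.lt_pow_succ_log_self one_lt_two _

/-- Dyadic decomposition: the shell `2ᵏρ ≤ d < 2ᵏ⁺¹ρ` holds at most `M 2ⁿ⁽ᵏ⁺¹⁾` indices,
each contributing at most `(2ᵏρ)⁻ᵖ`, and since `n < p` these bounds decay geometrically in `k`. -/
theorem sum_inv_pow_le_of_card_filter_le {ι : Type*} (S : Finset ι) (d : ι → ℝ) {ρ M : ℝ}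
    {n p : ℕ} (hnp : n < p) (hρ : 0 < ρ) (hd : ∀ i ∈ S, ρ ≤ d i)
    (hcount : ∀ R, ρ ≤ R → (#{i ∈ S | d i ≤ R} : ℝ) ≤ M * (R / ρ) ^ n) :
    ∑ i ∈ S, (d i ^ p)⁻¹ ≤ 2 ^ (n + 1) * M / ρ ^ p := by
  set shell : ι → ℕ := fun i => Nat.log 2 ⌊d i / ρ⌋₊
  have hM : 0 ≤ M := by
    simpa [div_self hρ.ne'] using (Nat.cast_nonneg _).trans (hcount ρ le_rfl)
  have hmaps : ∀ i ∈ S, shell i ∈ range (S.sup shell + 1) :=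
    fun i hi => mem_range.2 (Nat.lt_succ_of_le (le_sup hi))
  have hshell : ∀ k,
      ∑ i ∈ S with shell i = k, (d i ^ p)⁻¹ ≤ 2 ^ n * M / ρ ^ p * (1 / 2) ^ k := by
    intro k
    have hbounds : ∀ i ∈ S.filter (shell · = k), 2 ^ k * ρ ≤ d i ∧ d i < 2 ^ (k + 1) * ρ := by
      intro i hi
      obtain ⟨hiS, rfl⟩ := mem_filter.1 hi
      exact pow_log_floor_div_mul_le_and_lt hρ (hd i hiS)
    have hcard : (#{i ∈ S | shell i = k} : ℝ) ≤ M * 2 ^ (n * (k + 1)) := by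
      calc (#{i ∈ S | shell i = k} : ℝ) ≤ #{i ∈ S | d i ≤ 2 ^ (k + 1) * ρ} := by
            gcongr with i hi
            exact fun hk => (hbounds i (mem_filter.2 ⟨hi, hk⟩)).2.le
        _ ≤ M * (2 ^ (k + 1) * ρ / ρ) ^ n :=
            hcount _ (le_mul_of_one_le_left hρ.le (one_le_pow₀ one_le_two))
        _ = M * 2 ^ (n * (k + 1)) := by
            rw [mul_div_cancel_right₀ _ hρ.ne', ← pow_mul, mul_comm (k + 1)]
    have hterm :
        ∀ i ∈ S.filter (shell · = k), (d i ^ p)⁻¹ ≤ ((2 ^ k) ^ (n + 1) * ρ ^ p)⁻¹ := by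
      intro i hi
      gcongr
      calc (2 ^ k) ^ (n + 1) * ρ ^ p ≤ (2 ^ k) ^ p * ρ ^ p := by
            gcongr
            · exact one_le_pow₀ one_le_two
            · exact hnp
        _ = (2 ^ k * ρ) ^ p := (mul_pow _ _ _).symm
        _ ≤ d i ^ p := by gcongr; exact (hbounds i hi).1
    calc ∑ i ∈ S with shell i = k, (d i ^ p)⁻¹
        ≤ #{i ∈ S | shell i = k} * ((2 ^ k) ^ (n + 1) * ρ ^ p)⁻¹ := by
          simpa using sum_le_card_nsmul _ _ _ hterm
      _ ≤ M * 2 ^ (n * (k + 1)) * ((2 ^ k) ^ (n + 1) * ρ ^ p)⁻¹ := by gcongr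
      _ = 2 ^ n * M / ρ ^ p * (1 / 2) ^ k := by
          rw [div_pow, one_pow]
          field_simp
          ring
  calc ∑ i ∈ S, (d i ^ p)⁻¹
      = ∑ k ∈ range (S.sup shell + 1), ∑ i ∈ S with shell i = k, (d i ^ p)⁻¹ :=
        (sum_fiberwise_of_maps_to hmaps _).symm
    _ ≤ ∑ k ∈ range (S.sup shell + 1), 2 ^ n * M / ρ ^ p * (1 / 2) ^ k :=
        sum_le_sum fun k _ => hshell k
    _ ≤ 2 ^ n * M / ρ ^ p * 2 := by
        rw [← mul_sum]
        gcongr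
        exact sum_geometric_two_le _
    _ = 2 ^ (n + 1) * M / ρ ^ p := by ring

section Separated

variable {E : Type*} [NormedAddCommGroup E] [NormedSpace ℝ E] [FiniteDimensional ℝ E]

theorem card_filter_dist_le_mul_pow_le {ι : Type*} [Fintype ι] {X : ι → E} {r : ℝ}
    (hr : 0 < r) (hX : Pairwise fun i j => r ≤ dist (X i) (X j)) (x : E) {R : ℝ}
    (hR : 0 ≤ R) :
    (#{i | dist x (X i) ≤ R} : ℝ) * (r / 2) ^ finrank ℝ E ≤ (R + r / 2) ^ finrank ℝ E := by
  borelize E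
  set μ : Measure E := Measure.addHaar
  set T : Finset ι := {i | dist x (X i) ≤ R}
  have hdisj : (T : Set ι).PairwiseDisjoint fun i => ball (X i) (r / 2) :=
    fun i _ j _ hij => ball_disjoint_ball (by linarith [hX hij])
  have hsub : (⋃ i ∈ T, ball (X i) (r / 2)) ⊆ ball x (R + r / 2) := by
    refine Set.iUnion₂_subset fun i hi => ball_subset_ball' ?_
    rw [dist_comm]
    linarith [(mem_filter.1 hi).2]
  have hvol : (T.card : ENNReal) * ENNReal.ofReal ((r / 2) ^ finrank ℝ E) * μ (ball 0 1) ≤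
      ENNReal.ofReal ((R + r / 2) ^ finrank ℝ E) * μ (ball 0 1) := by
    calc (T.card : ENNReal) * ENNReal.ofReal ((r / 2) ^ finrank ℝ E) * μ (ball 0 1)
        = μ (⋃ i ∈ T, ball (X i) (r / 2)) := by
          rw [measure_biUnion_finset hdisj fun i _ => measurableSet_ball]
          simp only [μ.addHaar_ball_of_pos _ (half_pos hr), sum_const, nsmul_eq_mul, mul_assoc]
      _ ≤ μ (ball x (R + r / 2)) := measure_mono hsub
      _ = ENNReal.ofReal ((R + r / 2) ^ finrank ℝ E) * μ (ball 0 1) :=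
          μ.addHaar_ball_of_pos _ (by positivity)
  have hle := (ENNReal.mul_le_mul_iff_left (measure_ball_pos μ _ zero_lt_one).ne'
    measure_ball_lt_top.ne).1 hvol
  rw [← ENNReal.ofReal_natCast, ← ENNReal.ofReal_mul (by positivity)] at hle
  exact (ENNReal.ofReal_le_ofReal_iff (by positivity)).1 hle

theorem sum_inv_dist_pow_le_of_separated {ι : Type*} [Fintype ι] {X : ι → E} {r : ℝ}
    (hr : 0 < r) (hX : Pairwise fun i j => r ≤ dist (X i) (X j)) {p : ℕ}
    (hp : finrank ℝ E < p) (x : E) (S : Finset ι) {ρ : ℝ} (hrρ : r / 2 ≤ ρ)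
    (hS : ∀ i ∈ S, ρ ≤ dist x (X i)) :
    ∑ i ∈ S, (dist x (X i) ^ p)⁻¹ ≤
      2 ^ (finrank ℝ E + 1) * (4 * ρ / r) ^ finrank ℝ E / ρ ^ p := by
  have hρ : 0 < ρ := (half_pos hr).trans_le hrρ
  refine sum_inv_pow_le_of_card_filter_le S _ hp hρ hS fun R hR => ?_
  have hR0 : 0 ≤ R := hρ.le.trans hR
  have hpack := card_filter_dist_le_mul_pow_le hr hX x hR0
  calc (#{i ∈ S | dist x (X i) ≤ R} : ℝ) ≤ #{i | dist x (X i) ≤ R} := by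
        gcongr
        exact subset_univ S
    _ ≤ ((R + r / 2) / (r / 2)) ^ finrank ℝ E := by
        rw [div_pow, le_div_iff₀ (by positivity)]
        exact hpack
    _ ≤ (4 * R / r) ^ finrank ℝ E := by
        refine pow_le_pow_left₀ (by positivity) ?_ _
        rw [div_le_div_iff₀ (half_pos hr) hr]
        nlinarith [hrρ.trans hR]
    _ = (4 * ρ / r) ^ finrank ℝ E * (R / ρ) ^ finrank ℝ E := by
        rw [← mul_pow]
        field_simp

end Separated

theorem inv_max_le_mul_ite_min {a t u K : ℝ} (ha : 0 < a) (ht : 0 ≤ t) (hK : 1 ≤ K)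
    (hau : a⁻¹ ≤ K * u) : (max a t)⁻¹ ≤ K * (if t = 0 then u else min u t⁻¹) := by
  split_ifs with ht0
  · rwa [ht0, max_eq_left ha.le]
  · have htpos : 0 < t := ht.lt_of_ne' ht0
    rw [mul_min_of_nonneg _ _ (zero_le_one.trans hK)]
    refine le_min ((inv_anti₀ ha (le_max_left a t)).trans hau) ?_
    calc (max a t)⁻¹ ≤ t⁻¹ := inv_anti₀ htpos (le_max_right a t)
      _ ≤ K * t⁻¹ := le_mul_of_one_le_left (inv_nonneg.2 ht) hK

/-- **Pointwise bound on sums of `|x - X_i|⁻⁴` for separated points.**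
If `X_1,…,X_N ∈ ℝ³` are `c N^{-1/3}`-separated then for every `x`,
`N⁻¹ ∑_{i : |x-X_i| ≥ cN^{-1/3}/2} |x-X_i|⁻⁴ ≤ C min(N^{1/3}, dist(x, {X_i})⁻¹)`,
where the minimum is interpreted as `N^{1/3}` when `x` coincides with one of the points. -/
theorem pointwise_sum_dist_pow_four (c : ℝ) (hc : 0 < c) :
    ∃ C : ℝ, 0 < C ∧ ∀ (N : ℕ), 0 < N → ∀ X : Fin N → EuclideanSpace ℝ (Fin 3),
      (∀ i j, i ≠ j → c * (N : ℝ) ^ (-(1 / 3 : ℝ)) ≤ dist (X i) (X j)) →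
      ∀ x : EuclideanSpace ℝ (Fin 3),
      (N : ℝ)⁻¹ *
          ∑ i ∈ Finset.univ.filter
              (fun i => c * (N : ℝ) ^ (-(1 / 3 : ℝ)) / 2 ≤ dist x (X i)),
            (dist x (X i)) ^ (-(4 : ℝ)) ≤
        C * (if Metric.infDist x (Set.range X) = 0 then (N : ℝ) ^ ((1 : ℝ) / 3)
          else min ((N : ℝ) ^ ((1 : ℝ) / 3)) (Metric.infDist x (Set.range X))⁻¹) := by
  refine ⟨1024 / c ^ 3 * max (2 / c) 1, by positivity, fun N hN X hX x => ?_⟩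
  set u := (N : ℝ) ^ ((1 : ℝ) / 3)
  have hu : 0 < u := by positivity
  have hu3 : u ^ 3 = N := by
    rw [← Real.rpow_natCast, ← Real.rpow_mul N.cast_nonneg]
    norm_num
  have hr : c * (N : ℝ) ^ (-(1 / 3 : ℝ)) = c / u := by
    rw [Real.rpow_neg N.cast_nonneg, ← div_eq_mul_inv]
  rw [hr] at hX ⊢
  set S := univ.filter fun i => c / u / 2 ≤ dist x (X i)
  set ρ := max (c / u / 2) (infDist x (Set.range X))
  have hρS : ∀ i ∈ S, ρ ≤ dist x (X i) :=
    fun i hi => max_le (mem_filter.1 hi).2 (infDist_le_dist_of_mem ⟨i, rfl⟩)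
  have hsum := sum_inv_dist_pow_le_of_separated (p := 4) (by positivity) hX
    (by simp) x S (le_max_left _ _) hρS
  rw [finrank_euclideanSpace_fin] at hsum
  have hr_inv : (c / u / 2)⁻¹ ≤ max (2 / c) 1 * u := by
    rw [inv_div, div_div_eq_mul_div, mul_div_right_comm]
    gcongr
    exact le_max_left _ _
  calc (N : ℝ)⁻¹ * ∑ i ∈ S, dist x (X i) ^ (-(4 : ℝ))
      = (N : ℝ)⁻¹ * ∑ i ∈ S, (dist x (X i) ^ 4)⁻¹ := by
        simp_rw [Real.rpow_neg dist_nonneg, Real.rpow_ofNat]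
    _ ≤ (N : ℝ)⁻¹ * (2 ^ (3 + 1) * (4 * ρ / (c / u)) ^ 3 / ρ ^ 4) := by gcongr
    _ = 1024 / c ^ 3 * ρ⁻¹ := by
        rw [← hu3]
        field_simp
        ring
    _ ≤ 1024 / c ^ 3 * (max (2 / c) 1 * _) := by
        gcongr
        exact inv_max_le_mul_ite_min (by positivity) infDist_nonneg (le_max_right _ _) hr_inv
    _ = _ := (mul_assoc _ _ _).symm
end

section
/- Let $X_1,\dots,X_N$ be points in a compact set $K \subset \mathbb{R}^3$ with $\min_{i\neq j}|X_i-X_j| \geq cN^{-1/3}$, let $R = rN^{-1/3}$ with $2r < c$, let $\bar\rho_N = \frac{1}{N}\sum_i \frac{1}{4\pi R^2}\mathcal{H}^2|_{\partial B_R(X_i)}$ and $\tilde\rho_N = \frac{1}{N}\sum_i \frac{1}{\frac{4}{3}\pi R^3}\mathds{1}_{B_R(X_i)}$. Then for every $p \in (1,\infty)$ there is $C_p$ such that for all $v \in W^{1,p}(\mathbb{R}^3)$, $\left|\int v \, d(\tilde\rho_N - \bar\rho_N)\right| \leq C_p\, N^{-1/3} r^{1-3/p}\, \|\nabla v\|_{L^p(\mathbb{R}^3)}$.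 -/
open MeasureTheory

/-- The uniform (normalized) probability measure on the unit sphere of `ℝ³`. -/
noncomputable def unitSphereMeasure : Measure (Metric.sphere (0 : EuclideanSpace ℝ (Fin 3)) 1) :=
  (volume : Measure (EuclideanSpace ℝ (Fin 3))).toSphere

/-- The average of `v` over the sphere `∂B_R(X)`. -/
noncomputable def sphereAverage (v : EuclideanSpace ℝ (Fin 3) → ℝ)
    (X : EuclideanSpace ℝ (Fin 3)) (R : ℝ) : ℝ :=
  ⨍ ω, v (X + R • (ω : EuclideanSpace ℝ (Fin 3))) ∂unitSphereMeasure

/-!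
On a ball `B_R(X)`, write the integral in polar coordinates around `X`. Along each ray,
`|v(X + tω) - v(X + Rω)| ≤ ∫_t^R |∇v(X + sω)| ds`, and integrating against `t^{n-1} dt` (using
`t^{n-1} ≤ s^{n-1}` for `t ≤ s`) gives `|⨍_{B_R(X)} v - ⨍_{∂B_R(X)} v| ≤ R ⨍_{B_R(X)} |∇v|`.
Summing over the `N` disjoint balls and applying Hölder's inequality on their union, of volume
`N |B_R|`, bounds the averaged difference by `R (N |B_R|)^{-1/p} ‖∇v‖_p`; for `R = r N^{-1/3}` and
`|B_R| = R³ |B_1|` this is `|B_1|^{-1/p} N^{-1/3} r^{1-3/p} ‖∇v‖_p`.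
-/

section Radial

open Set

variable {φ φ' ψ : ℝ → ℝ} {R : ℝ} (k : ℕ)

theorem abs_sub_le_intervalIntegral_of_abs_deriv_le (hφ : ∀ u, HasDerivAt φ (φ' u) u)
    (hφ' : Continuous φ') (hψ : Continuous ψ) (hle : ∀ u, |φ' u| ≤ ψ u) {t : ℝ} (htR : t ≤ R) :
    |φ t - φ R| ≤ ∫ u in t..R, ψ u := by
  rw [abs_sub_comm, ← intervalIntegral.integral_eq_sub_of_hasDerivAt (fun u _ ↦ hφ u)
    (hφ'.intervalIntegrable t R)]
  exact (intervalIntegral.abs_integral_le_integral_abs htR).trans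
    (intervalIntegral.integral_mono_on htR (hφ'.abs.intervalIntegrable t R)
      (hψ.intervalIntegrable t R) fun u _ ↦ hle u)

theorem pow_mul_abs_sub_le_setIntegral_Ioo (hφ : ∀ u, HasDerivAt φ (φ' u) u)
    (hφ' : Continuous φ') (hψ : Continuous ψ) (hle : ∀ u, |φ' u| ≤ ψ u) {t : ℝ} (ht : 0 < t)
    (htR : t ≤ R) :
    t ^ k * |φ t - φ R| ≤ ∫ u in Ioo 0 R, u ^ k * ψ u := by
  have hψ_nonneg : ∀ u, 0 ≤ ψ u := fun u ↦ (abs_nonneg _).trans (hle u)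
  have hcont : Continuous fun u ↦ u ^ k * ψ u := by fun_prop
  calc t ^ k * |φ t - φ R|
      ≤ t ^ k * ∫ u in t..R, ψ u := by
        gcongr
        exact abs_sub_le_intervalIntegral_of_abs_deriv_le hφ hφ' hψ hle htR
    _ = ∫ u in t..R, t ^ k * ψ u := (intervalIntegral.integral_const_mul _ _).symm
    _ ≤ ∫ u in t..R, u ^ k * ψ u :=
        intervalIntegral.integral_mono_on htR ((continuous_const.mul hψ).intervalIntegrable t R)
          (hcont.intervalIntegrable t R) fun u hu ↦ by
            gcongr
            · exact hψ_nonneg u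
            · exact hu.1
    _ = ∫ u in Ioc t R, u ^ k * ψ u := intervalIntegral.integral_of_le htR
    _ ≤ ∫ u in Ioo 0 R, u ^ k * ψ u := by
        refine setIntegral_mono_set (hcont.integrableOn_Icc.mono_set Ioo_subset_Icc_self)
          ?_ ?_
        · filter_upwards [ae_restrict_mem measurableSet_Ioo] with u hu
          exact mul_nonneg (pow_nonneg hu.1.le k) (hψ_nonneg u)
        · exact (Ioc_subset_Ioc ht.le le_rfl).eventuallyLE.trans Ioo_ae_eq_Ioc.symm.le

theorem abs_setIntegral_Ioo_pow_mul_sub_le (hR : 0 ≤ R) (hφ : ∀ u, HasDerivAt φ (φ' u) u)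
    (hφ' : Continuous φ') (hψ : Continuous ψ) (hle : ∀ u, |φ' u| ≤ ψ u) :
    |(∫ t in Ioo 0 R, t ^ k * φ t) - (∫ t in Ioo 0 R, t ^ k) * φ R| ≤
      R * ∫ t in Ioo 0 R, t ^ k * ψ t := by
  have hφc : Continuous φ := continuous_iff_continuousAt.2 fun u ↦ (hφ u).continuousAt
  have hint : ∀ {f : ℝ → ℝ}, Continuous f → IntegrableOn f (Ioo 0 R) := fun hf ↦
    hf.integrableOn_Icc.mono_set Ioo_subset_Icc_self
  calc |(∫ t in Ioo 0 R, t ^ k * φ t) - (∫ t in Ioo 0 R, t ^ k) * φ R|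
      = |∫ t in Ioo 0 R, t ^ k * (φ t - φ R)| := by
        simp only [mul_sub]
        rw [integral_sub (hint (by fun_prop)) (hint (by fun_prop)),
          integral_mul_const (φ R) fun t ↦ t ^ k]
    _ ≤ ∫ t in Ioo 0 R, |t ^ k * (φ t - φ R)| := abs_integral_le_integral_abs
    _ ≤ ∫ _t in Ioo 0 R, ∫ u in Ioo 0 R, u ^ k * ψ u := by
        refine setIntegral_mono_on (hint (by fun_prop)) (integrableOn_const measure_Ioo_lt_top.ne)
          measurableSet_Ioo fun t ht ↦ ?_
        rw [abs_mul, abs_of_nonneg (pow_nonneg ht.1.le k)]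
        exact pow_mul_abs_sub_le_setIntegral_Ioo k hφ hφ' hψ hle ht.1 ht.2.le
    _ = R * ∫ t in Ioo 0 R, t ^ k * ψ t := by
        rw [setIntegral_const, Real.volume_real_Ioo_of_le hR, sub_zero, smul_eq_mul]

end Radial

theorem smearing_scale_identity {N r b p : ℝ} (hN : 0 < N) (hr : 0 < r) (hb : 0 < b) :
    N⁻¹ * (r * N ^ (-(1 / 3 : ℝ)) * N ^ (1 - 1 / p) *
        ((r * N ^ (-(1 / 3 : ℝ))) ^ 3 * b) ^ (-(1 / p))) =
      b ^ (-(1 / p)) * N ^ (-(1 / 3 : ℝ)) * r ^ ((1 : ℝ) - 3 / p) := by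
  have hR : 0 < r * N ^ (-(1 / 3 : ℝ)) := by positivity
  have hr_exp : r ^ ((1 : ℝ) - 3 / p) = r * r ^ (3 * -(1 / p)) := by
    rw [show (1 : ℝ) - 3 / p = 1 + 3 * -(1 / p) by ring, Real.rpow_add hr, Real.rpow_one]
  have hN_exp : N⁻¹ * N ^ (1 - 1 / p) * N ^ (-(1 / 3 : ℝ)) * N ^ (-(1 / 3 : ℝ) * (3 * -(1 / p))) =
      N ^ (-(1 / 3 : ℝ)) := by
    rw [← Real.rpow_neg_one, ← Real.rpow_add hN, ← Real.rpow_add hN, ← Real.rpow_add hN]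
    ring_nf
  rw [Real.mul_rpow (by positivity) hb.le, ← Real.rpow_natCast, ← Real.rpow_mul hR.le,
    Real.mul_rpow hr.le (by positivity), ← Real.rpow_mul hN.le]
  calc _ = (N⁻¹ * N ^ (1 - 1 / p) * N ^ (-(1 / 3 : ℝ)) * N ^ (-(1 / 3 : ℝ) * (3 * -(1 / p)))) *
        b ^ (-(1 / p)) * (r * r ^ (3 * -(1 / p))) := by push_cast; ring
    _ = _ := by rw [hN_exp, ← hr_exp]; ring

namespace MeasureTheory

open Function Metric Set

local notation "dim" => Module.finrank ℝ

theorem setIntegral_norm_le_eLpNorm_mul_measureReal_rpow {α F : Type*} [MeasurableSpace α]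
    {μ : Measure α} [NormedAddCommGroup F] {f : α → F} {p : ℝ} (hp : 1 ≤ p)
    (hf : MemLp f (ENNReal.ofReal p) μ) {s : Set α} (hs : μ s ≠ ⊤) :
    ∫ x in s, ‖f x‖ ∂μ ≤ (eLpNorm f (ENNReal.ofReal p) μ).toReal * μ.real s ^ (1 - 1 / p) := by
  have hholder :
      eLpNorm f 1 (μ.restrict s) ≤ eLpNorm f (ENNReal.ofReal p) μ * μ s ^ (1 - 1 / p) := by
    have := eLpNorm_le_eLpNorm_mul_rpow_measure_univ (p := 1) (q := ENNReal.ofReal p)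
      (by simpa using hp) (hf.1.restrict (s := s))
    rw [Measure.restrict_apply_univ, ENNReal.toReal_ofReal (by linarith), ENNReal.toReal_one,
      div_one] at this
    exact this.trans (by gcongr; exact Measure.restrict_le_self)
  have hexp : 0 ≤ 1 - 1 / p := sub_nonneg.2 ((div_le_one (by linarith)).2 hp)
  rw [integral_norm_eq_lintegral_enorm hf.1.restrict, ← eLpNorm_one_eq_lintegral_enorm,
    measureReal_def, ENNReal.toReal_rpow, ← ENNReal.toReal_mul]
  exact ENNReal.toReal_mono (ENNReal.mul_ne_top hf.2.ne (ENNReal.rpow_ne_top_of_nonneg hexp hs))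
    hholder

theorem integral_volumeIoiPow {F : Type*} [NormedAddCommGroup F] [NormedSpace ℝ F]
    (n : ℕ) (f : ℝ → F) :
    ∫ t, f t ∂Measure.volumeIoiPow n = ∫ t in Ioi (0 : ℝ), t ^ n • f t := by
  simp only [Measure.volumeIoiPow, ENNReal.ofReal]
  rw [integral_withDensity_eq_integral_smul (measurable_subtype_coe.pow_const _).real_toNNReal,
    integral_subtype_comap measurableSet_Ioi fun t ↦ (t ^ n).toNNReal • f t]
  refine setIntegral_congr_fun measurableSet_Ioi fun t ht ↦ ?_
  rw [NNReal.smul_def, Real.coe_toNNReal _ (pow_nonneg (le_of_lt ht) _)]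

section Translation

variable {E F : Type*} [NormedAddCommGroup E] [MeasurableSpace E] [BorelSpace E]
  [NormedAddCommGroup F] [NormedSpace ℝ F] (μ : Measure E) [μ.IsAddLeftInvariant]

theorem setIntegral_ball_eq_setIntegral_ball_zero (f : E → F) (X : E) (R : ℝ) :
    ∫ x in ball X R, f x ∂μ = ∫ y in ball 0 R, f (X + y) ∂μ := by
  rw [← (measurePreserving_add_left μ X).setIntegral_preimage_emb
    (measurableEmbedding_addLeft X)]
  simp [preimage_add_ball]

end Translation

section PolarCoordinates

variable {E F : Type*} [NormedAddCommGroup E] [NormedSpace ℝ E] [NormedAddCommGroup F]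

theorem homeomorphUnitSphereProd_snd_smul_fst (x : ({0}ᶜ : Set E)) :
    ((homeomorphUnitSphereProd E x).2 : ℝ) • (homeomorphUnitSphereProd E x).1 = (x : E) := by
  simp [smul_inv_smul₀ (norm_ne_zero_iff.2 x.2)]

theorem hasDerivAt_comp_smul {w : E → ℝ} (hw : Differentiable ℝ w) (ω : E) (t : ℝ) :
    HasDerivAt (fun s : ℝ ↦ w (s • ω)) (fderiv ℝ w (t • ω) ω) t :=
  (hw _).hasFDerivAt.comp_hasDerivAt t (by simpa using (hasDerivAt_id t).smul_const ω)

theorem setIntegral_Ioi_indicator_ball [NormedSpace ℝ F] (f : E → F) (R : ℝ) (k : ℕ)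
    (ω : sphere (0 : E) 1) :
    ∫ t in Ioi (0 : ℝ), t ^ k • (ball (0 : E) R).indicator f (t • (ω : E)) =
      ∫ t in Ioo (0 : ℝ) R, t ^ k • f (t • (ω : E)) := by
  rw [← Ioi_inter_Iio, ← setIntegral_indicator measurableSet_Iio]
  refine setIntegral_congr_fun measurableSet_Ioi fun t (ht : 0 < t) ↦ ?_
  have hmem : t • (ω : E) ∈ ball (0 : E) R ↔ t ∈ Iio R := by
    rw [mem_ball_zero_iff, norm_smul, norm_eq_of_mem_sphere ω, mul_one, Real.norm_of_nonneg ht.le,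
      mem_Iio]
  by_cases h : t < R
  · rw [indicator_of_mem (hmem.2 h), indicator_of_mem (show t ∈ Iio R from h)]
  · rw [indicator_of_notMem (mt hmem.1 h), indicator_of_notMem (show t ∉ Iio R from h), smul_zero]

variable [FiniteDimensional ℝ E] [MeasurableSpace E] [BorelSpace E]
  (μ : Measure E) [μ.IsAddHaarMeasure]

theorem integrable_comp_smul_toSphere_prod {g : E → F} (hg : Integrable g μ) :
    Integrable (fun z : sphere (0 : E) 1 × Ioi (0 : ℝ) ↦ g ((z.2 : ℝ) • (z.1 : E)))
      (μ.toSphere.prod (Measure.volumeIoiPow (dim E - 1))) := by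
  rw [← (μ.measurePreserving_homeomorphUnitSphereProd).integrable_comp_emb
    (homeomorphUnitSphereProd E).measurableEmbedding]
  simp only [Function.comp_def, homeomorphUnitSphereProd_snd_smul_fst]
  rw [← Function.comp_def g, ← integrableOn_iff_comap_subtypeVal (measurableSet_singleton 0).compl]
  exact hg.integrableOn

variable [NormedSpace ℝ F]

theorem integral_eq_integral_toSphere_prod [Nontrivial E] (g : E → F) :
    ∫ x, g x ∂μ = ∫ z, g ((z.2 : ℝ) • (z.1 : E))
      ∂(μ.toSphere.prod (Measure.volumeIoiPow (dim E - 1))) := by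
  rw [← (μ.measurePreserving_homeomorphUnitSphereProd).integral_comp
    (homeomorphUnitSphereProd E).measurableEmbedding]
  simp only [homeomorphUnitSphereProd_snd_smul_fst]
  rw [integral_subtype_comap (measurableSet_singleton _).compl g, restrict_compl_singleton]

theorem integral_eq_integral_toSphere_integral_Ioi [Nontrivial E] {g : E → F}
    (hg : Integrable g μ) :
    ∫ x, g x ∂μ = ∫ ω, (∫ t in Ioi (0 : ℝ), t ^ (dim E - 1) • g (t • (ω : E))) ∂μ.toSphere := by
  rw [integral_eq_integral_toSphere_prod μ g,
    integral_prod _ (integrable_comp_smul_toSphere_prod μ hg)]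
  exact integral_congr_ae (.of_forall fun ω ↦ integral_volumeIoiPow _ fun t ↦ g (t • (ω : E)))

theorem integrable_toSphere_integral_Ioi {g : E → F} (hg : Integrable g μ) :
    Integrable (fun ω : sphere (0 : E) 1 ↦ ∫ t in Ioi (0 : ℝ), t ^ (dim E - 1) • g (t • (ω : E)))
      μ.toSphere :=
  (integrable_comp_smul_toSphere_prod μ hg).integral_prod_left.congr
    (.of_forall fun ω ↦ integral_volumeIoiPow _ fun t ↦ g (t • (ω : E)))

theorem setIntegral_ball_eq_integral_toSphere_integral_Ioo [Nontrivial E] {f : E → F} {R : ℝ}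
    (hf : IntegrableOn f (ball 0 R) μ) :
    ∫ x in ball (0 : E) R, f x ∂μ =
      ∫ ω, (∫ t in Ioo (0 : ℝ) R, t ^ (dim E - 1) • f (t • (ω : E))) ∂μ.toSphere := by
  rw [← integral_indicator measurableSet_ball, integral_eq_integral_toSphere_integral_Ioi μ
    ((integrable_indicator_iff measurableSet_ball).2 hf)]
  simp only [setIntegral_Ioi_indicator_ball]

theorem integrable_toSphere_integral_Ioo {f : E → F} {R : ℝ} (hf : IntegrableOn f (ball 0 R) μ) :
    Integrable (fun ω : sphere (0 : E) 1 ↦ ∫ t in Ioo (0 : ℝ) R, t ^ (dim E - 1) • f (t • (ω : E)))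
      μ.toSphere := by
  simpa only [setIntegral_Ioi_indicator_ball] using
    integrable_toSphere_integral_Ioi μ ((integrable_indicator_iff measurableSet_ball).2 hf)

end PolarCoordinates

section BallSphere

variable {E : Type*} [NormedAddCommGroup E] [NormedSpace ℝ E] [FiniteDimensional ℝ E]
  [MeasurableSpace E] [BorelSpace E] (μ : Measure E) [μ.IsAddHaarMeasure]

theorem sum_setAverage_ball_norm_le {F : Type*} [NormedAddCommGroup F] {ι : Type*} [Fintype ι]
    {X : ι → E} {R : ℝ} (hR : 0 < R) (hdisj : Pairwise (Disjoint on fun i ↦ ball (X i) R))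
    {f : E → F} {p : ℝ} (hp : 1 ≤ p) (hf : MemLp f (ENNReal.ofReal p) μ) :
    ∑ i, ⨍ x in ball (X i) R, ‖f x‖ ∂μ ≤
      (Fintype.card ι : ℝ) ^ (1 - 1 / p) * μ.real (ball 0 R) ^ (-(1 / p)) *
        (eLpNorm f (ENNReal.ofReal p) μ).toReal := by
  set V := μ.real (ball (0 : E) R)
  have hV : 0 < V := ENNReal.toReal_pos (measure_ball_pos μ 0 hR).ne' measure_ball_lt_top.ne
  have hunion : μ.real (⋃ i, ball (X i) R) = Fintype.card ι * V := by
    rw [measureReal_iUnion_fintype hdisj fun _ ↦ measurableSet_ball]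
    simp [V, Measure.addHaar_real_ball_center]
  have hfin : μ (⋃ i, ball (X i) R) ≠ ⊤ :=
    (measure_iUnion_fintype_le μ _).trans_lt
      (ENNReal.sum_lt_top.2 fun _ _ ↦ measure_ball_lt_top) |>.ne
  have hfint {s : Set E} (hs : μ s ≠ ⊤) : IntegrableOn (fun x ↦ ‖f x‖) s μ :=
    have := isFiniteMeasure_restrict.2 hs
    ((hf.restrict s).integrable (by simpa using hp)).norm
  calc ∑ i, ⨍ x in ball (X i) R, ‖f x‖ ∂μ
      = V⁻¹ * ∫ x in ⋃ i, ball (X i) R, ‖f x‖ ∂μ := by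
        rw [integral_iUnion_fintype (fun _ ↦ measurableSet_ball) hdisj
          fun _ ↦ hfint measure_ball_lt_top.ne, Finset.mul_sum]
        refine Finset.sum_congr rfl fun i _ ↦ ?_
        rw [setAverage_eq, Measure.addHaar_real_ball_center, smul_eq_mul]
    _ ≤ V⁻¹ * ((eLpNorm f (ENNReal.ofReal p) μ).toReal * (Fintype.card ι * V) ^ (1 - 1 / p)) := by
        rw [← hunion]
        gcongr
        exact setIntegral_norm_le_eLpNorm_mul_measureReal_rpow hp hf hfin
    _ = (Fintype.card ι : ℝ) ^ (1 - 1 / p) * (V⁻¹ * V ^ (1 - 1 / p)) *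
          (eLpNorm f (ENNReal.ofReal p) μ).toReal := by
        rw [Real.mul_rpow (Nat.cast_nonneg _) hV.le]; ring
    _ = _ := by
        rw [← Real.rpow_neg_one, ← Real.rpow_add hV]; ring_nf

variable [Nontrivial E]

theorem abs_setIntegral_ball_sub_integral_sphere_le {w : E → ℝ} (hw : ContDiff ℝ 1 w) {R : ℝ}
    (hR : 0 ≤ R) :
    |(∫ x in ball 0 R, w x ∂μ) -
        (∫ t in Ioo 0 R, t ^ (dim E - 1)) * ∫ ω, w (R • (ω : E)) ∂μ.toSphere| ≤
      R * ∫ x in ball 0 R, ‖fderiv ℝ w x‖ ∂μ := by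
  have hDw : Continuous (fderiv ℝ w) := hw.continuous_fderiv one_ne_zero
  have hint : ∀ {f : E → ℝ}, Continuous f → IntegrableOn f (ball 0 R) μ := fun hf ↦
    (hf.continuousOn.integrableOn_compact (isCompact_closedBall 0 R)).mono_set
      ball_subset_closedBall
  have hsphere : Integrable (fun ω : sphere (0 : E) 1 ↦ w (R • (ω : E))) μ.toSphere :=
    (hw.continuous.comp (continuous_subtype_val.const_smul R)).integrable_of_hasCompactSupport
      (isClosed_tsupport _).isCompact
  have hradial : ∀ ω : sphere (0 : E) 1,
      |(∫ t in Ioo 0 R, t ^ (dim E - 1) • w (t • (ω : E))) -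
          (∫ t in Ioo 0 R, t ^ (dim E - 1)) * w (R • (ω : E))| ≤
        R * ∫ t in Ioo 0 R, t ^ (dim E - 1) • ‖fderiv ℝ w (t • (ω : E))‖ := fun ω ↦ by
    simp only [smul_eq_mul]
    refine abs_setIntegral_Ioo_pow_mul_sub_le _ hR
      (hasDerivAt_comp_smul (hw.differentiable one_ne_zero) ω)
      ((hDw.comp (continuous_id.smul continuous_const)).clm_apply continuous_const)
      (hDw.comp (continuous_id.smul continuous_const)).norm fun u ↦ ?_
    calc |fderiv ℝ w (u • (ω : E)) ω| ≤ ‖fderiv ℝ w (u • (ω : E))‖ * ‖(ω : E)‖ :=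
          (fderiv ℝ w _).le_opNorm _
      _ = ‖fderiv ℝ w (u • (ω : E))‖ := by rw [norm_eq_of_mem_sphere ω, mul_one]
  rw [setIntegral_ball_eq_integral_toSphere_integral_Ioo μ (hint hw.continuous),
    setIntegral_ball_eq_integral_toSphere_integral_Ioo μ (hint hDw.norm), ← integral_const_mul,
    ← integral_sub (integrable_toSphere_integral_Ioo μ (hint hw.continuous))
      (hsphere.const_mul _), ← integral_const_mul]
  exact abs_integral_le_integral_abs.trans <|
    integral_mono_of_nonneg (.of_forall fun _ ↦ abs_nonneg _)
      ((integrable_toSphere_integral_Ioo μ (hint hDw.norm)).const_mul R) (.of_forall hradial)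

theorem measureReal_ball_eq_toSphere_mul (R : ℝ) :
    μ.real (ball 0 R) = μ.toSphere.real univ * ∫ t in Ioo 0 R, t ^ (dim E - 1) := by
  simpa using setIntegral_ball_eq_integral_toSphere_integral_Ioo μ (f := fun _ ↦ (1 : ℝ))
    (integrableOn_const measure_ball_lt_top.ne)

theorem abs_setAverage_ball_sub_average_sphere_le {v : E → ℝ} (hv : ContDiff ℝ 1 v) (X : E)
    {R : ℝ} (hR : 0 < R) :
    |(⨍ x in ball X R, v x ∂μ) - ⨍ ω, v (X + R • (ω : E)) ∂μ.toSphere| ≤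
      R * ⨍ x in ball X R, ‖fderiv ℝ v x‖ ∂μ := by
  have key := abs_setIntegral_ball_sub_integral_sphere_le μ (w := fun y ↦ v (X + y))
    (hv.comp (contDiff_const.add contDiff_id)) hR.le
  simp only [fderiv_comp_add_left X] at key
  set c := ∫ t in Ioo 0 R, t ^ (dim E - 1)
  set V := μ.real (ball (0 : E) R)
  have hV : 0 < V := ENNReal.toReal_pos (measure_ball_pos μ 0 hR).ne' measure_ball_lt_top.ne
  have hS : (μ.toSphere.real univ)⁻¹ = V⁻¹ * c := by
    have hVc : V = μ.toSphere.real univ * c := measureReal_ball_eq_toSphere_mul μ R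
    have hc : c ≠ 0 := by rintro hc; simp [hc] at hVc; linarith
    rw [hVc]; field_simp
  rw [setAverage_eq, setAverage_eq, average_eq, Measure.addHaar_real_ball_center,
    setIntegral_ball_eq_setIntegral_ball_zero μ v X,
    setIntegral_ball_eq_setIntegral_ball_zero μ (fun x ↦ ‖fderiv ℝ v x‖) X,
    smul_eq_mul, smul_eq_mul, smul_eq_mul, hS]
  calc _ = V⁻¹ * |(∫ y in ball 0 R, v (X + y) ∂μ) - c * ∫ ω, v (X + R • (ω : E)) ∂μ.toSphere| := by
        rw [← abs_of_pos (inv_pos.2 hV), ← abs_mul, abs_of_pos (inv_pos.2 hV)]; ring_nf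
    _ ≤ V⁻¹ * (R * ∫ y in ball 0 R, ‖fderiv ℝ v (X + y)‖ ∂μ) := by gcongr
    _ = _ := by ring

theorem abs_sum_setAverage_ball_sub_average_sphere_le {ι : Type*} [Fintype ι] {X : ι → E}
    {R : ℝ} (hR : 0 < R) (hdisj : Pairwise (Disjoint on fun i ↦ ball (X i) R)) {v : E → ℝ}
    (hv : ContDiff ℝ 1 v) {p : ℝ} (hp : 1 ≤ p) (hDv : MemLp (fderiv ℝ v) (ENNReal.ofReal p) μ) :
    |∑ i, ((⨍ x in ball (X i) R, v x ∂μ) - ⨍ ω, v (X i + R • (ω : E)) ∂μ.toSphere)| ≤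
      R * ((Fintype.card ι : ℝ) ^ (1 - 1 / p) * μ.real (ball 0 R) ^ (-(1 / p)) *
        (eLpNorm (fderiv ℝ v) (ENNReal.ofReal p) μ).toReal) :=
  calc _ ≤ ∑ i, |(⨍ x in ball (X i) R, v x ∂μ) - ⨍ ω, v (X i + R • (ω : E)) ∂μ.toSphere| :=
        Finset.abs_sum_le_sum_abs _ _
    _ ≤ ∑ i, R * ⨍ x in ball (X i) R, ‖fderiv ℝ v x‖ ∂μ :=
        Finset.sum_le_sum fun i _ ↦ abs_setAverage_ball_sub_average_sphere_le μ hv (X i) hR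
    _ ≤ _ := by
        rw [← Finset.mul_sum]
        exact mul_le_mul_of_nonneg_left (sum_setAverage_ball_norm_le μ hR hdisj hp hDv) hR.le

end BallSphere

end MeasureTheory

/-- **Estimate between ball-smeared and sphere-smeared empirical measures.**
Let `X_1,…,X_N ∈ K` compact with `min_{i≠j}|X_i-X_j| ≥ cN^{-1/3}`, `R = rN^{-1/3}`
with `2r < c`.  With `ρ̄_N` smearing the empirical measure onto the spheres `∂B_R(X_i)`
and `ρ̃_N` onto the balls `B_R(X_i)`, for every `p ∈ (1,∞)` there is `C_p` with
`|∫ v d(ρ̃_N - ρ̄_N)| ≤ C_p N^{-1/3} r^{1-3/p} ‖∇v‖_{L^p(ℝ³)}` for all `v ∈ W^{1,p}`. -/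
theorem ball_sphere_smearing_estimate (p : ℝ) (hp : 1 < p) :
    ∃ C : ℝ, 0 < C ∧
      ∀ (N : ℕ), 0 < N → ∀ (c r : ℝ), 0 < c → 0 < r → 2 * r < c →
      ∀ (K : Set (EuclideanSpace ℝ (Fin 3))), IsCompact K →
      ∀ X : Fin N → EuclideanSpace ℝ (Fin 3), (∀ i, X i ∈ K) →
      (∀ i j, i ≠ j → c * (N : ℝ) ^ (-(1 / 3 : ℝ)) ≤ dist (X i) (X j)) →
      ∀ v : EuclideanSpace ℝ (Fin 3) → ℝ, ContDiff ℝ 1 v → HasCompactSupport v →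
      |(N : ℝ)⁻¹ * (∑ i, ⨍ x in Metric.ball (X i) (r * (N : ℝ) ^ (-(1 / 3 : ℝ))), v x) -
          (N : ℝ)⁻¹ * ∑ i, sphereAverage v (X i) (r * (N : ℝ) ^ (-(1 / 3 : ℝ)))| ≤
        C * (N : ℝ) ^ (-(1 / 3 : ℝ)) * r ^ ((1 : ℝ) - 3 / p) *
          (eLpNorm (fun x => ‖fderiv ℝ v x‖) (ENNReal.ofReal p) volume).toReal := by
  set b := (volume : Measure (EuclideanSpace ℝ (Fin 3))).real (Metric.ball 0 1)
  have hb : 0 < b := ENNReal.toReal_pos (Metric.measure_ball_pos _ _ one_pos).ne'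
    measure_ball_lt_top.ne
  refine ⟨b ^ (-(1 / p)), Real.rpow_pos_of_pos hb _, ?_⟩
  intro N hN c r hc hr hrc K _ X _ hsep v hv hcs
  have hN' : (0 : ℝ) < N := Nat.cast_pos.2 hN
  set R := r * (N : ℝ) ^ (-(1 / 3 : ℝ))
  have hR : 0 < R := by positivity
  -- `R + R = 2 r N^{-1/3} < c N^{-1/3} ≤ dist (X i) (X j)`
  have hdisj : Pairwise (Function.onFun Disjoint fun i ↦ Metric.ball (X i) R) := fun i j hij ↦
    Metric.ball_disjoint_ball <| by
      nlinarith [hsep i j hij, Real.rpow_pos_of_pos hN' (-(1 / 3 : ℝ))]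
  have hvol : (volume : Measure (EuclideanSpace ℝ (Fin 3))).real (Metric.ball 0 R) = R ^ 3 * b := by
    rw [measureReal_def, Measure.addHaar_ball_of_pos _ _ hR, ENNReal.toReal_mul,
      ENNReal.toReal_ofReal (by positivity), finrank_euclideanSpace_fin]
    rfl
  have key := abs_sum_setAverage_ball_sub_average_sphere_le volume hR hdisj hv hp.le
    ((hv.continuous_fderiv one_ne_zero).memLp_of_hasCompactSupport (hcs.fderiv ℝ))
  rw [Fintype.card_fin, hvol] at key
  rw [eLpNorm_norm, ← mul_sub, ← Finset.sum_sub_distrib, abs_mul, abs_of_pos (inv_pos.2 hN'),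
    ← smearing_scale_identity hN' hr hb, mul_assoc]
  refine mul_le_mul_of_nonneg_left (key.trans_eq ?_) (inv_pos.2 hN').le
  ring
end
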